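/- In Q(q), with δ = [3][8][13][18]/([4][6][9]), φ = [2][7][12]/([4][6]), and [n] = (q^n - q^{-n})/(q - q^{-1}), the quantity z_2 = (δ + q^{16} + q^{-16})(q^6+q^{-6})(q^4+q^{-4})(q^2-q^{-2})/(φ·(q^4+q^{-4}-δ)) equals (q^{-4}-q^4)/[3]. -/
import Mathlib


/-- The generator q of the field of rational functions ℚ(q). -/
noncomputable def q : RatFunc ℚ := RatFunc.X

/-- The quantum integer [n] = (q^n - q^{-n})/(q - q^{-1}) in ℚ(q). -/
noncomputable def qint (n : ℤ) : RatFunc ℚ := (q ^ n - q ^ (-n)) / (q - q⁻¹)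

/-- δ = [3][8][13][18]/([4][6][9]). -/
noncomputable def deltaF4 : RatFunc ℚ :=
  qint 3 * qint 8 * qint 13 * qint 18 / (qint 4 * qint 6 * qint 9)

/-- φ = [2][7][12]/([4][6]). -/
noncomputable def phiF4 : RatFunc ℚ := qint 2 * qint 7 * qint 12 / (qint 4 * qint 6)

lemma hq : q ≠ 0 := RatFunc.X_ne_zero

lemma hqmap : algebraMap (Polynomial ℚ) (RatFunc ℚ) Polynomial.X = q := RatFunc.algebraMap_X

lemma qpow_sub_one_ne (n : ℕ) (hn : 0 < n) : q ^ n - 1 ≠ 0 := by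
  have : q ^ n - 1 = algebraMap (Polynomial ℚ) (RatFunc ℚ) (Polynomial.X ^ n - Polynomial.C 1) := by
    simp [q, map_sub, map_pow, hqmap]
  rw [this]
  exact RatFunc.algebraMap_ne_zero (Polynomial.X_pow_sub_C_ne_zero hn 1)

lemma hq2 : q ^ 2 - 1 ≠ 0 := qpow_sub_one_ne 2 (by norm_num)

lemma aux (a b : RatFunc ℚ) (ha : a ≠ 0) (hb : b ≠ 0) :
    (a - a⁻¹)/(b - b⁻¹) = ((a^2-1)*b)/((b^2-1)*a) := by
  field_simp

lemma qint_eq (n : ℕ) : qint ((n:ℤ)+1) = ((q^((n+1)*2) - 1) * q) / ((q^2-1) * q^(n+1)) := by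
  rw [qint, show ((n:ℤ)+1) = ((n+1:ℕ):ℤ) by push_cast; ring, zpow_neg, zpow_natCast,
    show q - q⁻¹ = q^1 - (q^1)⁻¹ by rw [pow_one],
    aux _ _ (pow_ne_zero _ hq) (pow_ne_zero _ hq), ← pow_mul, ← pow_mul]
  norm_num

lemma e2 : qint 2 = ((q^4 - 1) * q) / ((q^2-1) * q^2) := by simpa using qint_eq 1
lemma e3 : qint 3 = ((q^6 - 1) * q) / ((q^2-1) * q^3) := by simpa using qint_eq 2
lemma e4 : qint 4 = ((q^8 - 1) * q) / ((q^2-1) * q^4) := by simpa using qint_eq 3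
lemma e6 : qint 6 = ((q^12 - 1) * q) / ((q^2-1) * q^6) := by simpa using qint_eq 5
lemma e7 : qint 7 = ((q^14 - 1) * q) / ((q^2-1) * q^7) := by simpa using qint_eq 6
lemma e8 : qint 8 = ((q^16 - 1) * q) / ((q^2-1) * q^8) := by simpa using qint_eq 7
lemma e9 : qint 9 = ((q^18 - 1) * q) / ((q^2-1) * q^9) := by simpa using qint_eq 8
lemma e12 : qint 12 = ((q^24 - 1) * q) / ((q^2-1) * q^12) := by simpa using qint_eq 11
lemma e13 : qint 13 = ((q^26 - 1) * q) / ((q^2-1) * q^13) := by simpa using qint_eq 12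
lemma e18 : qint 18 = ((q^36 - 1) * q) / ((q^2-1) * q^18) := by simpa using qint_eq 17

set_option maxHeartbeats 1000000 in
lemma hdelta : deltaF4 * q^22 = (1 + q^2 + q^4 + q^8 + q^10 + 2*q^12 + q^14 + q^16 + q^18 + 2*q^20 + 2*q^22 + 2*q^24 + q^26 + q^28 + q^30 + 2*q^32 + q^34 + q^36 + q^40 + q^42 + q^44) := by
  rw [deltaF4, e3, e4, e6, e8, e9, e13, e18,
    div_mul_div_comm, div_mul_div_comm, div_mul_div_comm, div_mul_div_comm, div_mul_div_comm,
    div_div_div_eq, div_mul_eq_mul_div]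
  rw [div_eq_iff (by
    repeat' apply mul_ne_zero
    all_goals first
      | exact hq
      | exact pow_ne_zero _ hq
      | exact hq2
      | exact qpow_sub_one_ne 8 (by norm_num)
      | exact qpow_sub_one_ne 12 (by norm_num)
      | exact qpow_sub_one_ne 18 (by norm_num))]
  ring

set_option maxHeartbeats 1000000 in
lemma hphi : phiF4 * q^10 = (1 + q^2 + q^8 + q^10 + q^12 + q^18 + q^20) := by
  rw [phiF4, e2, e7, e12, e4, e6,
    div_mul_div_comm, div_mul_div_comm, div_mul_div_comm,
    div_div_div_eq, div_mul_eq_mul_div]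
  rw [div_eq_iff (by
    repeat' apply mul_ne_zero
    all_goals first
      | exact hq
      | exact pow_ne_zero _ hq
      | exact hq2
      | exact qpow_sub_one_ne 8 (by norm_num)
      | exact qpow_sub_one_ne 12 (by norm_num))]
  ring

lemma hdelta' : deltaF4 = (1 + q^2 + q^4 + q^8 + q^10 + 2*q^12 + q^14 + q^16 + q^18 + 2*q^20 + 2*q^22 + 2*q^24 + q^26 + q^28 + q^30 + 2*q^32 + q^34 + q^36 + q^40 + q^42 + q^44) / q^22 :=
  (eq_div_iff (pow_ne_zero 22 hq)).mpr hdelta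

lemma hphi' : phiF4 = (1 + q^2 + q^8 + q^10 + q^12 + q^18 + q^20) / q^10 :=
  (eq_div_iff (pow_ne_zero 10 hq)).mpr hphi

lemma phi_ne : phiF4 ≠ 0 := by
  rw [hphi']
  apply div_ne_zero _ (pow_ne_zero _ hq)
  have : (1 + q^2 + q^8 + q^10 + q^12 + q^18 + q^20 : RatFunc ℚ)
      = algebraMap (Polynomial ℚ) (RatFunc ℚ)
        (1 + Polynomial.X^2 + Polynomial.X^8 + Polynomial.X^10 + Polynomial.X^12 + Polynomial.X^18 + Polynomial.X^20) := by
    simp [q, map_add, map_pow, map_one, hqmap]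
  rw [this]
  apply RatFunc.algebraMap_ne_zero
  intro h
  have := congrArg (Polynomial.eval 1) h
  simp at this
  norm_num at this

set_option maxHeartbeats 1000000 in
lemma hT : q ^ (4:ℤ) + q ^ (-4:ℤ) - deltaF4
    = -(1 + q^2 + q^4 + q^8 + q^10 + 2*q^12 + q^14 + q^16 + 2*q^20 + 2*q^22 + 2*q^24 + q^28 + q^30 + 2*q^32 + q^34 + q^36 + q^40 + q^42 + q^44) / q^22 := by
  rw [hdelta', show (4:ℤ) = ((4:ℕ):ℤ) by norm_num, zpow_neg, zpow_natCast]
  rw [eq_div_iff (pow_ne_zero 22 hq)]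
  have hq' := hq
  field_simp
  ring

lemma e3' : qint 3 = (q^4+q^2+1)/q^2 := by
  rw [e3, div_eq_div_iff (mul_ne_zero hq2 (pow_ne_zero _ hq)) (pow_ne_zero _ hq)]
  ring

lemma hA : deltaF4 + q ^ (16:ℤ) + q ^ (-16:ℤ) = (1 + q^2 + q^4 + q^8 + q^10 + 2*q^12 + q^14 + q^16 + q^18 + 2*q^20 + 2*q^22 + 2*q^24 + q^26 + q^28 + q^30 + 2*q^32 + q^34 + q^36 + q^40 + q^42 + q^44 + q^38 + q^6) / q^22 := by
  rw [hdelta', show (16:ℤ) = ((16:ℕ):ℤ) by norm_num]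
  simp only [zpow_neg, zpow_natCast]
  rw [eq_div_iff (pow_ne_zero 22 hq)]
  have hq' := hq
  field_simp

lemma s6 : q ^ (6:ℤ) + q ^ (-6:ℤ) = (q^12 + 1) / q^6 := by
  rw [show (6:ℤ) = ((6:ℕ):ℤ) by norm_num]
  simp only [zpow_neg, zpow_natCast]
  rw [eq_div_iff (pow_ne_zero 6 hq)]
  have hq' := hq
  field_simp

lemma s4 : q ^ (4:ℤ) + q ^ (-4:ℤ) = (q^8 + 1) / q^4 := by
  rw [show (4:ℤ) = ((4:ℕ):ℤ) by norm_num]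
  simp only [zpow_neg, zpow_natCast]
  rw [eq_div_iff (pow_ne_zero 4 hq)]
  have hq' := hq
  field_simp

lemma d2 : q ^ (2:ℤ) - q ^ (-2:ℤ) = (q^4 - 1) / q^2 := by
  rw [show (2:ℤ) = ((2:ℕ):ℤ) by norm_num]
  simp only [zpow_neg, zpow_natCast]
  rw [eq_div_iff (pow_ne_zero 2 hq)]
  have hq' := hq
  field_simp

lemma m4 : q ^ (-4:ℤ) - q ^ (4:ℤ) = (1 - q^8) / q^4 := by
  rw [show (4:ℤ) = ((4:ℕ):ℤ) by norm_num]
  simp only [zpow_neg, zpow_natCast]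
  rw [eq_div_iff (pow_ne_zero 4 hq)]
  have hq' := hq
  field_simp

set_option maxHeartbeats 4000000 in
/-- z₂ = (δ+q^16+q^{-16})(q^6+q^{-6})(q^4+q^{-4})(q^2-q^{-2})/(φ(q^4+q^{-4}-δ))
      = (q^{-4}-q^4)/[3]. -/
theorem z2_identity :
    (deltaF4 + q ^ (16 : ℤ) + q ^ (-16 : ℤ)) * (q ^ (6 : ℤ) + q ^ (-6 : ℤ)) *
        (q ^ (4 : ℤ) + q ^ (-4 : ℤ)) * (q ^ (2 : ℤ) - q ^ (-2 : ℤ)) /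
        (phiF4 * (q ^ (4 : ℤ) + q ^ (-4 : ℤ) - deltaF4))
      = (q ^ (-4 : ℤ) - q ^ (4 : ℤ)) / qint 3 := by
  have hTne : q ^ (4:ℤ) + q ^ (-4:ℤ) - deltaF4 ≠ 0 := by
    rw [hT]
    apply div_ne_zero _ (pow_ne_zero _ hq)
    rw [neg_ne_zero]
    have : (1 + q^2 + q^4 + q^8 + q^10 + 2*q^12 + q^14 + q^16 + 2*q^20 + 2*q^22 + 2*q^24 + q^28 + q^30 + 2*q^32 + q^34 + q^36 + q^40 + q^42 + q^44 : RatFunc ℚ)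
        = algebraMap (Polynomial ℚ) (RatFunc ℚ)
          (1 + Polynomial.X^2 + Polynomial.X^4 + Polynomial.X^8 + Polynomial.X^10 + 2*Polynomial.X^12 + Polynomial.X^14 + Polynomial.X^16 + 2*Polynomial.X^20 + 2*Polynomial.X^22 + 2*Polynomial.X^24 + Polynomial.X^28 + Polynomial.X^30 + 2*Polynomial.X^32 + Polynomial.X^34 + Polynomial.X^36 + Polynomial.X^40 + Polynomial.X^42 + Polynomial.X^44) := by
      simp [q, map_add, map_pow, map_one, map_mul, map_ofNat, hqmap]
    rw [this]
    apply RatFunc.algebraMap_ne_zero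
    intro h
    have := congrArg (Polynomial.eval 1) h
    simp at this
    norm_num at this
  have h3ne : qint 3 ≠ 0 := by
    rw [e3]
    exact div_ne_zero (mul_ne_zero (qpow_sub_one_ne 6 (by norm_num)) hq)
      (mul_ne_zero hq2 (pow_ne_zero _ hq))
  rw [div_eq_div_iff (mul_ne_zero phi_ne hTne) h3ne]
  rw [hT, hA, s6, s4, d2, m4, hphi', e3']
  simp only [div_mul_div_comm]
  rw [div_eq_div_iff (by
      repeat' apply mul_ne_zero
      all_goals first | exact hq | exact pow_ne_zero _ hq)
    (by
      repeat' apply mul_ne_zero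
      all_goals first | exact hq | exact pow_ne_zero _ hq)]
  ring
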